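/- arXiv:math/0407296 — 5 statements merged into one kernel-verified Lean document; each statement's English description precedes it below -/
import Mathlib

section
/- Let n ∈ ℕ, let r, α₁, …, αₙ, x be nonzero complex numbers, and let y ∈ ℂ satisfy y² = x(x − r)(x − r⁻¹)·∏_{i=1}^{n}(x − αᵢ)(x − αᵢ⁻¹)(x − conj(αᵢ))(x − conj(αᵢ)⁻¹). Set z = x + x⁻¹, R = r + r⁻¹, λᵢ = αᵢ + αᵢ⁻¹, and w₋ = (x + 1)(x − 1)·y / x^{n+2}. Then w₋² = (z − 2)(z + 2)(z − R)·∏_{i=1}^{n}(z − λᵢ)(z − conj(λᵢ)). (This is the identification of the quotient map q₋ : X → C₋ from the odd-genus spectral curve X to the curve C₋.) -/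
open ComplexConjugate

theorem add_inv_sub_add_inv {K : Type*} [Field K] {x a : K} (hx : x ≠ 0) (ha : a ≠ 0) :
    x + x⁻¹ - (a + a⁻¹) = (x - a) * (x - a⁻¹) / x := by
  field_simp
  ring

/-- Identification of the quotient map `q₋ : X → C₋` for the odd-genus spectral curve:
if `y² = x(x−r)(x−r⁻¹)·∏ᵢ (x−αᵢ)(x−αᵢ⁻¹)(x−conj αᵢ)(x−(conj αᵢ)⁻¹)`, then with
`z = x + x⁻¹`, `R = r + r⁻¹`, `λᵢ = αᵢ + αᵢ⁻¹`, `w₋ = (x+1)(x−1)y / x^(n+2)`, we have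
`w₋² = (z−2)(z+2)(z−R)·∏ᵢ (z−λᵢ)(z−conj λᵢ)`. -/
theorem stmt_1 (n : ℕ) (r : ℂ) (hr : r ≠ 0) (α : Fin n → ℂ) (hα : ∀ i, α i ≠ 0)
    (x : ℂ) (hx : x ≠ 0) (y : ℂ)
    (hy : y ^ 2 = x * (x - r) * (x - r⁻¹) *
      ∏ i : Fin n, (x - α i) * (x - (α i)⁻¹) * (x - conj (α i)) * (x - (conj (α i))⁻¹))
    (z R : ℂ) (l : Fin n → ℂ)
    (hz : z = x + x⁻¹) (hR : R = r + r⁻¹) (hl : ∀ i, l i = α i + (α i)⁻¹)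
    (w : ℂ) (hw : w = (x + 1) * (x - 1) * y / x ^ (n + 2)) :
    w ^ 2 = (z - 2) * (z + 2) * (z - R) * ∏ i : Fin n, (z - l i) * (z - conj (l i)) := by
  subst hz hR hw
  -- `±2 = ±1 + (±1)⁻¹`, so the branch points `z = ±2` come from `x = ±1`.
  have h_sub_two : x + x⁻¹ - 2 = (x - 1) * (x - 1⁻¹) / x := by
    rw [← add_inv_sub_add_inv hx one_ne_zero]; norm_num
  have h_add_two : x + x⁻¹ + 2 = (x - -1) * (x - (-1)⁻¹) / x := by
    rw [← add_inv_sub_add_inv hx (neg_ne_zero.mpr one_ne_zero)]; norm_num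
  have h_factor : ∀ i, (x + x⁻¹ - l i) * (x + x⁻¹ - conj (l i)) =
      (x - α i) * (x - (α i)⁻¹) * (x - conj (α i)) * (x - (conj (α i))⁻¹) / x ^ 2 := by
    intro i
    rw [hl i, map_add, map_inv₀, add_inv_sub_add_inv hx (hα i),
      add_inv_sub_add_inv hx ((map_ne_zero conj).mpr (hα i))]
    ring
  rw [h_sub_two, h_add_two, add_inv_sub_add_inv hx hr, Finset.prod_congr rfl fun i _ => h_factor i,
    Finset.prod_div_distrib, Finset.prod_const, Finset.card_univ, Fintype.card_fin, div_pow,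
    mul_pow, hy]
  field_simp
  ring
end

section
/- Let n ∈ ℕ, let α₁, …, αₙ, x be nonzero complex numbers, and let y ∈ ℂ satisfy y² = x·∏_{i=1}^{n}(x − αᵢ)(x − αᵢ⁻¹)(x − conj(αᵢ))(x − conj(αᵢ)⁻¹). Set z = x + x⁻¹, λᵢ = αᵢ + αᵢ⁻¹, and w₊ = (x + 1)·y / x^{n+1}. Then w₊² = (z + 2)·∏_{i=1}^{n}(z − λᵢ)(z − conj(λᵢ)). (This is the identification of the quotient map q₊ : X → C₊ from the even-genus spectral curve X to the curve C₊.) -/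
open ComplexConjugate

theorem add_inv_add_two {K : Type*} [Field K] {x : K} (hx : x ≠ 0) :
    x + x⁻¹ + 2 = (x + 1) ^ 2 / x := by
  field_simp
  ring

/-- Identification of the quotient map `q₊ : X → C₊` for the even-genus spectral curve:
if `y² = x·∏ᵢ (x−αᵢ)(x−αᵢ⁻¹)(x−conj αᵢ)(x−(conj αᵢ)⁻¹)`, then with `z = x + x⁻¹`,
`λᵢ = αᵢ + αᵢ⁻¹`, `w₊ = (x+1)y / x^(n+1)`, we have
`w₊² = (z+2)·∏ᵢ (z−λᵢ)(z−conj λᵢ)`. -/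
theorem stmt_2 (n : ℕ) (α : Fin n → ℂ) (hα : ∀ i, α i ≠ 0)
    (x : ℂ) (hx : x ≠ 0) (y : ℂ)
    (hy : y ^ 2 = x *
      ∏ i : Fin n, (x - α i) * (x - (α i)⁻¹) * (x - conj (α i)) * (x - (conj (α i))⁻¹))
    (z : ℂ) (l : Fin n → ℂ)
    (hz : z = x + x⁻¹) (hl : ∀ i, l i = α i + (α i)⁻¹)
    (w : ℂ) (hw : w = (x + 1) * y / x ^ (n + 1)) :
    w ^ 2 = (z + 2) * ∏ i : Fin n, (z - l i) * (z - conj (l i)) := by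
  have hfactor (i : Fin n) : (z - l i) * (z - conj (l i)) =
      (x - α i) * (x - (α i)⁻¹) * (x - conj (α i)) * (x - (conj (α i))⁻¹) / x ^ 2 := by
    rw [hz, hl, map_add, map_inv₀, add_inv_sub_add_inv hx (hα i),
      add_inv_sub_add_inv hx ((map_ne_zero _).2 (hα i))]
    ring
  rw [Finset.prod_congr rfl fun i _ => hfactor i, Finset.prod_div_distrib, Finset.prod_const,
    Finset.card_univ, Fintype.card_fin, hw, div_pow, mul_pow, hy, hz, add_inv_add_two hx]
  field_simp
  ring
end

section
/- Let n ∈ ℕ and let λ₁, …, λₙ be complex numbers that are not real. Let z be a real number with −2 < z < 2. (a) If w ∈ ℂ satisfies w² = (z + 2)·∏_{i=1}^{n}(z − λᵢ)(z − conj(λᵢ)), then w is real, i.e. conj(w) = w; hence the real structure ρ₊(z, w) = (conj z, conj w) of C₊ fixes every point of C₊ lying over the interval (−2, 2). (b) If w ∈ ℂ satisfies w² = (z − 2)(z + 2)·∏_{i=1}^{n}(z − λᵢ)(z − conj(λᵢ)), then w is purely imaginary, i.e. conj(w) = −w; hence the real structure ρ₋(z, w) = (conj z, −conj w) of C₋ fixes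 every point of C₋ lying over the interval (−2, 2). -/
open ComplexConjugate

private lemma aux_pos (w : ℂ) (r : ℝ) (hr : 0 < r) (hw : w ^ 2 = (r : ℂ)) : conj w = w := by
  have h1 : w.re * w.re - w.im * w.im = r := by
    have := congrArg Complex.re hw
    simpa [pow_two, Complex.mul_re] using this
  have h2 : w.re * w.im + w.im * w.re = 0 := by
    have := congrArg Complex.im hw
    simpa [pow_two, Complex.mul_im] using this
  have him : w.im = 0 := by
    by_contra h
    have hre : w.re = 0 := by
      rcases mul_eq_zero.mp (by linarith : w.re * w.im = 0) with h' | h'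
      · exact h'
      · exact absurd h' h
    nlinarith [sq_nonneg w.im]
  apply Complex.ext <;> simp [him]

private lemma aux_neg (w : ℂ) (r : ℝ) (hr : r < 0) (hw : w ^ 2 = (r : ℂ)) : conj w = -w := by
  have h1 : w.re * w.re - w.im * w.im = r := by
    have := congrArg Complex.re hw
    simpa [pow_two, Complex.mul_re] using this
  have h2 : w.re * w.im + w.im * w.re = 0 := by
    have := congrArg Complex.im hw
    simpa [pow_two, Complex.mul_im] using this
  have hre : w.re = 0 := by
    by_contra h
    have him : w.im = 0 := by
      rcases mul_eq_zero.mp (by linarith : w.re * w.im = 0) with h' | h'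
      · exact absurd h' h
      · exact h'
    nlinarith [sq_nonneg w.re]
  apply Complex.ext <;> simp [hre]

/-- For `λ₁, …, λₙ` non-real and real `z ∈ (−2, 2)`:
(a) any `w` with `w² = (z+2)·∏ᵢ (z−λᵢ)(z−conj λᵢ)` is real, so the real structure
`ρ₊(z,w) = (conj z, conj w)` of `C₊` fixes the points of `C₊` over `(−2, 2)`;
(b) any `w` with `w² = (z−2)(z+2)·∏ᵢ (z−λᵢ)(z−conj λᵢ)` is purely imaginary, so the real
structure `ρ₋(z,w) = (conj z, −conj w)` of `C₋` fixes the points of `C₋` over `(−2, 2)`. -/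
theorem stmt_7 (n : ℕ) (l : Fin n → ℂ) (hl : ∀ i, (l i).im ≠ 0)
    (z : ℝ) (hz1 : -2 < z) (hz2 : z < 2) :
    (∀ w : ℂ, w ^ 2 = ((z : ℂ) + 2) *
        ∏ i : Fin n, ((z : ℂ) - l i) * ((z : ℂ) - conj (l i)) → conj w = w) ∧
    (∀ w : ℂ, w ^ 2 = ((z : ℂ) - 2) * ((z : ℂ) + 2) *
        ∏ i : Fin n, ((z : ℂ) - l i) * ((z : ℂ) - conj (l i)) → conj w = -w) := by
  set P : ℝ := ∏ i : Fin n, Complex.normSq ((z : ℂ) - l i) with hPdef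
  have hPpos : 0 < P := by
    apply Finset.prod_pos
    intro i _
    apply Complex.normSq_pos.mpr
    intro h
    apply hl i
    have := congrArg Complex.im h
    simp at this
    linarith [this]
  have hprod : ∏ i : Fin n, ((z : ℂ) - l i) * ((z : ℂ) - conj (l i)) = (P : ℂ) := by
    rw [hPdef]
    push_cast
    apply Finset.prod_congr rfl
    intro i _
    rw [← Complex.mul_conj]
    congr 1
    simp [map_sub, Complex.conj_ofReal]
  constructor
  · intro w hw
    rw [hprod] at hw
    have hw' : w ^ 2 = (((z + 2) * P : ℝ) : ℂ) := by rw [hw]; push_cast; ring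
    exact aux_pos w _ (mul_pos (by linarith) hPpos) hw'
  · intro w hw
    rw [hprod] at hw
    have hw' : w ^ 2 = (((z - 2) * (z + 2) * P : ℝ) : ℂ) := by rw [hw]; push_cast; ring
    refine aux_neg w _ ?_ hw'
    have h1 : z - 2 < 0 := by linarith
    have h2 : 0 < (z + 2) * P := mul_pos (by linarith) hPpos
    nlinarith
end

section
/- Let n ∈ ℕ, let R be a real number with R > 2, and let λ₁, …, λₙ be complex numbers that are not real. Let z be a real number with −2 < z < 2. (a) If w ∈ ℂ satisfies w² = (z − R)·∏_{i=1}^{n}(z − λᵢ)(z − conj(λᵢ)), then w is purely imaginary, i.e. conj(w) = −w; hence the real structure ρ₊(z, w) = (conj z, −conj w) of C₊ fixes every point of C₊ lying over the interval (−2, 2). (b) If w ∈ ℂ satisfies w² = (z − 2)(z + 2)(z − R)·∏_{i=1}^{n}(z − λᵢ)(z − conj(λᵢ)), then w is real, i.e. conj(w) = w; hence the real structure ρ₋(z, w) = (conj z, conj w) of C₋ fixes every point of C₋ lying over the interval (−2, 2). -/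
open ComplexConjugate

lemma sq_real_neg_imp {w : ℂ} {c : ℝ} (h : w ^ 2 = (c : ℂ)) (hc : c < 0) :
    conj w = -w := by
  have h1 : (conj w) ^ 2 = w ^ 2 := by
    rw [← map_pow, h, Complex.conj_ofReal]
  rcases sq_eq_sq_iff_eq_or_eq_neg.mp h1 with h2 | h2
  · exfalso
    have him : w.im = 0 := Complex.conj_eq_iff_im.mp h2
    have : w ^ 2 = ((w.re : ℂ)) ^ 2 := by
      rw [Complex.ext_iff] at *
      constructor <;> simp [pow_two, Complex.mul_re, Complex.mul_im, him]
    rw [this] at h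
    have : ((w.re ^ 2 : ℝ) : ℂ) = (c : ℂ) := by push_cast; exact this ▸ h
    have hc2 : w.re ^ 2 = c := by exact_mod_cast this
    nlinarith [sq_nonneg w.re]
  · exact h2

lemma sq_real_pos_imp {w : ℂ} {c : ℝ} (h : w ^ 2 = (c : ℂ)) (hc : 0 < c) :
    conj w = w := by
  have h1 : (conj w) ^ 2 = w ^ 2 := by
    rw [← map_pow, h, Complex.conj_ofReal]
  rcases sq_eq_sq_iff_eq_or_eq_neg.mp h1 with h2 | h2
  · exact h2
  · exfalso
    have hre : w.re = 0 := by
      have := congrArg Complex.re h2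
      simp at this
      linarith
    have : w ^ 2 = -((w.im : ℂ)) ^ 2 := by
      rw [Complex.ext_iff] at *
      constructor <;> simp [pow_two, Complex.mul_re, Complex.mul_im, hre]
    rw [this] at h
    have : ((-(w.im ^ 2) : ℝ) : ℂ) = (c : ℂ) := by push_cast; linear_combination h
    have hc2 : -(w.im ^ 2) = c := by exact_mod_cast this
    nlinarith [sq_nonneg w.im]

/-- For `R > 2`, `λ₁, …, λₙ` non-real and real `z ∈ (−2, 2)`:
(a) any `w` with `w² = (z−R)·∏ᵢ (z−λᵢ)(z−conj λᵢ)` is purely imaginary, so the real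
structure `ρ₊(z,w) = (conj z, −conj w)` of `C₊` fixes the points of `C₊` over `(−2, 2)`;
(b) any `w` with `w² = (z−2)(z+2)(z−R)·∏ᵢ (z−λᵢ)(z−conj λᵢ)` is real, so the real
structure `ρ₋(z,w) = (conj z, conj w)` of `C₋` fixes the points of `C₋` over `(−2, 2)`. -/
theorem stmt_8 (n : ℕ) (R : ℝ) (hR : 2 < R) (l : Fin n → ℂ) (hl : ∀ i, (l i).im ≠ 0)
    (z : ℝ) (hz1 : -2 < z) (hz2 : z < 2) :
    (∀ w : ℂ, w ^ 2 = ((z : ℂ) - (R : ℂ)) *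
        ∏ i : Fin n, ((z : ℂ) - l i) * ((z : ℂ) - conj (l i)) → conj w = -w) ∧
    (∀ w : ℂ, w ^ 2 = ((z : ℂ) - 2) * ((z : ℂ) + 2) * ((z : ℂ) - (R : ℂ)) *
        ∏ i : Fin n, ((z : ℂ) - l i) * ((z : ℂ) - conj (l i)) → conj w = w) := by
  set P : ℝ := ∏ i : Fin n, Complex.normSq ((z : ℂ) - l i) with hP
  have hfac : ∀ i : Fin n, ((z : ℂ) - l i) * ((z : ℂ) - conj (l i)) =
      ((Complex.normSq ((z : ℂ) - l i) : ℝ) : ℂ) := by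
    intro i
    rw [← Complex.mul_conj]
    congr 1
    simp [map_sub, Complex.conj_ofReal]
  have hprod : (∏ i : Fin n, ((z : ℂ) - l i) * ((z : ℂ) - conj (l i))) = ((P : ℝ) : ℂ) := by
    rw [hP, Complex.ofReal_prod]
    exact Finset.prod_congr rfl fun i _ => hfac i
  have hPpos : 0 < P := by
    apply Finset.prod_pos
    intro i _
    apply Complex.normSq_pos.mpr
    intro hzero
    apply hl i
    have : l i = (z : ℂ) := by linear_combination -hzero
    rw [this]; simp
  constructor
  · intro w hw
    rw [hprod] at hw
    have hw' : w ^ 2 = (((z - R) * P : ℝ) : ℂ) := by push_cast; rw [hw]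
    exact sq_real_neg_imp hw' (by nlinarith)
  · intro w hw
    rw [hprod] at hw
    have hw' : w ^ 2 = (((z - 2) * (z + 2) * (z - R) * P : ℝ) : ℂ) := by push_cast; rw [hw]
    refine sq_real_pos_imp hw' ?_
    have h1 : (0:ℝ) < (2 - z) * (z + 2) * (R - z) * P :=
      mul_pos (mul_pos (mul_pos (by linarith) (by linarith)) (by linarith)) hPpos
    nlinarith [h1]
end

section
/- Let D be a nonzero real number and let x be a real number with x ≠ D and 4x ≠ 5D. Then T_D(x) ≠ D, and 1/(T_D(x) − D) = 1/(x − D) − 4/D. In other words, under the coordinate change S(x) = 1/(x − D), the transformation T_D becomes the translation u ↦ u − 4/D. -/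
/-! Subtracting the fixed point gives `T_D(x) − D = D(D − x)/(4x − 5D)`, and since
`4x − 5D = 4(x − D) − D`, the reciprocal splits as `1/(x − D) − 4/D`. -/

namespace LinearFractional

variable {K : Type*} [Field K]

def T (D x : K) : K := D * (3 * x - 4 * D) / (4 * x - 5 * D)

theorem T_sub_self {D x : K} (hx : 4 * x ≠ 5 * D) :
    T D x - D = D * (D - x) / (4 * x - 5 * D) := by
  have h : 4 * x - 5 * D ≠ 0 := sub_ne_zero.mpr hx
  rw [T, eq_div_iff h, sub_mul, div_mul_cancel₀ _ h]
  ring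

theorem T_ne_self {D x : K} (hD : D ≠ 0) (hxD : x ≠ D) (hx : 4 * x ≠ 5 * D) : T D x ≠ D := by
  rw [← sub_ne_zero, T_sub_self hx]
  exact div_ne_zero (mul_ne_zero hD (sub_ne_zero.mpr hxD.symm)) (sub_ne_zero.mpr hx)

theorem one_div_T_sub_self {D x : K} (hD : D ≠ 0) (hxD : x ≠ D) (hx : 4 * x ≠ 5 * D) :
    1 / (T D x - D) = 1 / (x - D) - 4 / D := by
  rw [T_sub_self hx]
  field_simp
  ring

end LinearFractional

open LinearFractional in
/-- For a nonzero real `D` and real `x` with `x ≠ D` and `4x ≠ 5D`, the linear fractional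
transformation `T_D(x) = D(3x − 4D)/(4x − 5D)` satisfies `T_D(x) ≠ D` and
`1/(T_D(x) − D) = 1/(x − D) − 4/D`: under the coordinate change `S(x) = 1/(x − D)`,
`T_D` becomes the translation `u ↦ u − 4/D`. -/
theorem stmt_11 (D : ℝ) (hD : D ≠ 0) (x : ℝ) (hxD : x ≠ D) (hx : 4 * x ≠ 5 * D) :
    D * (3 * x - 4 * D) / (4 * x - 5 * D) ≠ D ∧
    1 / (D * (3 * x - 4 * D) / (4 * x - 5 * D) - D) = 1 / (x - D) - 4 / D :=
  ⟨T_ne_self hD hxD hx, one_div_T_sub_self hD hxD hx⟩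
end
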